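/- Let n ≥ 2 and p ≠ 0. Let μ be an even discrete measure on S^{n−1} with support {±u_1,…,±u_N} (u_1,…,u_N spanning ℝ^n) and weights μ_i > 0. For an origin-symmetric convex body Q containing the origin in its interior, set Q̃ = conv{±ρ_Q(u_1)u_1,…,±ρ_Q(u_N)u_N} ∈ D_μ. Then h_{Q̃}(v) ≤ h_Q(v) for all v ∈ S^{n−1}, ρ_{Q̃}(u_i) ≥ ρ_Q(u_i) for each i, and consequently Φ(Q) ≤ Φ(Q̃). In particular, sup{Φ(Q) : Q ∈ D_μ} = sup{Φ(Q) : Q an origin-symmetric convex body containing the origin in its interior}. -/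

import Mathlib

open MeasureTheory Real Filter
open scoped InnerProductSpace ENNReal Topology Pointwise

noncomputable section

abbrev E (n : ℕ) := EuclideanSpace ℝ (Fin n)

def sph (n : ℕ) : Set (E n) := Metric.sphere 0 1

def suppFn {n : ℕ} (K : Set (E n)) (v : E n) : ℝ := sSup ((fun x => ⟪x, v⟫_ℝ) '' K)

def radFn {n : ℕ} (K : Set (E n)) (u : E n) : ℝ := sSup {r : ℝ | 0 ≤ r ∧ r • u ∈ K}

def rgi {n : ℕ} (K ω : Set (E n)) : Set (E n) :=
  {v | v ∈ sph n ∧ ∃ u ∈ ω, ⟪v, radFn K u • u⟫_ℝ = suppFn K v}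

def hm (n : ℕ) : Measure (E n) := μH[(n : ℝ) - 1]

def entropy {n : ℕ} (Q : Set (E n)) : ℝ := -∫ v in sph n, Real.log (suppFn Q v) ∂(hm n)

def ballVol (m : ℕ) : ℝ := (volume (Metric.ball (0 : E m) 1)).toReal

def Phi {n N : ℕ} (p : ℝ) (u : Fin N → E n) (w : Fin N → ℝ) (Q : Set (E n)) : ℝ :=
  (1 / (n * ballVol n)) * entropy Q
    - (1 / p) * Real.log (2 * ∑ i, radFn Q (u i) ^ (-p) * w i)

def Dmu {n N : ℕ} (u : Fin N → E n) : Set (Set (E n)) :=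
  {Q | ∃ ρ : Fin N → ℝ, (∀ i, 0 < ρ i) ∧
    Q = convexHull ℝ (⋃ i, ({ρ i • u i, -(ρ i • u i)} : Set (E n)))}

/-!
A convex symmetric `Q` contains every `±ρ_Q(u_i) u_i`, so `Q̃ ⊆ Q`: this gives `h_{Q̃} ≤ h_Q`,
and `ρ_{Q̃}(u_i) ≥ ρ_Q(u_i)` because `ρ_Q(u_i) u_i ∈ Q̃`. The entropy is decreasing in the support
function and `-(1/p) log Σ ρ(u_i)^{-p} μ_i` is increasing in the radial values for either sign
of `p`, so `Φ(Q) ≤ Φ(Q̃)`. The entropies are genuine integrals, not the junk value `0`: `log h` is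
continuous on the sphere, whose `(n-1)`-dimensional Hausdorff measure is finite because radial
projection from tangent hyperplanes covers it by finitely many Lipschitz images of balls. Since every polytope of `D_μ` is
itself an admissible body, the two suprema coincide.
-/

open Module Metric Set

section SphereMeasure

variable {F : Type*}

theorem lipschitzOnWith_inv_norm_smul [NormedAddCommGroup F] [NormedSpace ℝ F] :
    LipschitzOnWith 2 (fun x : F => ‖x‖⁻¹ • x) {x | 1 ≤ ‖x‖} := by
  refine LipschitzOnWith.of_dist_le_mul fun x hx y hy => ?_
  have hx0 : 0 < ‖x‖ := one_pos.trans_le hx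
  have hsplit : ‖x‖⁻¹ • x - ‖y‖⁻¹ • y = ‖x‖⁻¹ • (x - y) + (‖x‖⁻¹ - ‖y‖⁻¹) • y := by
    rw [smul_sub, sub_smul]; abel
  have hy : ‖(‖x‖⁻¹ - ‖y‖⁻¹) • y‖ ≤ ‖x‖⁻¹ * ‖x - y‖ := by
    have hy0 : 0 < ‖y‖ := one_pos.trans_le hy
    rw [norm_smul, Real.norm_eq_abs, inv_sub_inv hx0.ne' hy0.ne', abs_div, abs_mul,
      abs_of_pos hx0, abs_of_pos hy0, div_mul_eq_mul_div, mul_div_mul_right _ _ hy0.ne',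
      div_eq_inv_mul]
    exact mul_le_mul_of_nonneg_left (abs_norm_sub_norm_le y x |>.trans_eq (norm_sub_rev _ _))
      (inv_nonneg.2 hx0.le)
  have hinv : ‖x‖⁻¹ ≤ 1 := inv_le_one_of_one_le₀ hx
  simp only [dist_eq_norm, NNReal.coe_ofNat]
  calc ‖‖x‖⁻¹ • x - ‖y‖⁻¹ • y‖
      ≤ ‖x‖⁻¹ * ‖x - y‖ + ‖x‖⁻¹ * ‖x - y‖ := by
        rw [hsplit]
        refine (norm_add_le _ _).trans (add_le_add ?_ hy)
        rw [norm_smul, Real.norm_eq_abs, abs_of_pos (inv_pos.2 hx0)]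
    _ ≤ 2 * ‖x - y‖ := by nlinarith [norm_nonneg (x - y)]

variable [NormedAddCommGroup F] [InnerProductSpace ℝ F] [FiniteDimensional ℝ F]
  [MeasurableSpace F] [BorelSpace F]

theorem hausdorffMeasure_sphere_cap_lt_top {e : F} (he : ‖e‖ = 1) :
    μH[(finrank ℝ F : ℝ) - 1] (sphere (0 : F) 1 ∩ {v | 1 / 2 < ⟪v, e⟫_ℝ}) < ⊤ := by
  set H := (ℝ ∙ e)ᗮ
  have hrank : (finrank ℝ F : ℝ) - 1 = finrank ℝ H := by
    have := (ℝ ∙ e).finrank_add_finrank_orthogonal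
    rw [finrank_span_singleton (norm_ne_zero_iff.1 (he ▸ one_ne_zero))] at this
    rw [← this]; push_cast; ring
  set f : H → F := fun y => ‖e + y‖⁻¹ • (e + y)
  have hf : LipschitzWith 2 f := by
    have hmaps : MapsTo (fun y : H => e + y) univ {x | 1 ≤ ‖x‖} := fun y _ => by
      have hsq := norm_add_sq_eq_norm_sq_add_norm_sq_real
        ((Submodule.mem_orthogonal_singleton_iff_inner_right).1 y.2)
      rw [he] at hsq
      show 1 ≤ ‖e + y‖
      nlinarith [norm_nonneg (e + y), sq_nonneg ‖(y : F)‖]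
    have hshift : LipschitzWith 1 (fun y : H => e + y) :=
      ((isometry_vadd F e).comp isometry_subtype_coe).lipschitz
    have := lipschitzOnWith_univ.1
      (lipschitzOnWith_inv_norm_smul.comp hshift.lipschitzOnWith hmaps)
    rwa [mul_one] at this
  have hcap : sphere (0 : F) 1 ∩ {v | 1 / 2 < ⟪v, e⟫_ℝ} ⊆ f '' closedBall 0 3 := by
    rintro v ⟨hv, ht⟩
    rw [mem_sphere_zero_iff_norm] at hv
    set t := ⟪v, e⟫_ℝ
    replace ht : 1 / 2 < t := ht
    have ht0 : 0 < t := by linarith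
    have hy : t⁻¹ • v - e ∈ H := by
      rw [Submodule.mem_orthogonal_singleton_iff_inner_right, inner_sub_right, inner_smul_right,
        real_inner_comm, real_inner_self_eq_norm_sq, he, inv_mul_cancel₀ ht0.ne']
      norm_num
    refine ⟨⟨_, hy⟩, ?_, ?_⟩
    · rw [mem_closedBall_zero_iff, Submodule.coe_norm]
      calc ‖t⁻¹ • v - e‖ ≤ ‖t⁻¹ • v‖ + ‖e‖ := norm_sub_le _ _
        _ ≤ 3 := by
          rw [norm_smul, hv, he, Real.norm_eq_abs, abs_of_pos (inv_pos.2 ht0)]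
          have : t⁻¹ ≤ 2 := by rw [inv_le_comm₀ ht0 two_pos]; linarith
          linarith
    · simp only [f, add_sub_cancel, norm_smul, hv, Real.norm_eq_abs, abs_of_pos (inv_pos.2 ht0),
        mul_one, inv_inv, smul_smul, mul_inv_cancel₀ ht0.ne', one_smul]
  rw [hrank]
  refine (measure_mono hcap).trans_lt <|
    (hf.hausdorffMeasure_image_le (by positivity) _).trans_lt ?_
  exact ENNReal.mul_lt_top (by simp [ENNReal.rpow_natCast])
    (isCompact_closedBall 0 3).measure_lt_top

theorem hausdorffMeasure_sphere_lt_top :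
    μH[(finrank ℝ F : ℝ) - 1] (sphere (0 : F) 1) < ⊤ := by
  obtain ⟨t, ht⟩ := (isCompact_sphere (0 : F) 1).elim_finite_subcover
    (fun e : sphere (0 : F) 1 => {v | 1 / 2 < ⟪v, (e : F)⟫_ℝ})
    (fun e => isOpen_lt continuous_const (by fun_prop))
    (fun v hv => mem_iUnion.2 ⟨⟨v, hv⟩, by norm_num [mem_sphere_zero_iff_norm.1 hv]⟩)
  have hcover :
      sphere (0 : F) 1 ⊆ ⋃ e ∈ t, sphere (0 : F) 1 ∩ {v | 1 / 2 < ⟪v, (e : F)⟫_ℝ} := by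
    intro v hv
    obtain ⟨e, he, hve⟩ := mem_iUnion₂.1 (ht hv)
    exact mem_iUnion₂.2 ⟨e, he, hv, hve⟩
  refine (measure_mono hcover).trans_lt (measure_biUnion_lt_top t.finite_toSet fun e _ => ?_)
  exact hausdorffMeasure_sphere_cap_lt_top (mem_sphere_zero_iff_norm.1 e.2)

end SphereMeasure

section SymmConvexHull

variable {ι V : Type*} [AddCommGroup V] [Module ℝ V]

def symmConvexHull (q : ι → V) : Set V :=
  convexHull ℝ (⋃ i, ({q i, -(q i)} : Set V))

theorem subset_symmConvexHull (q : ι → V) (i : ι) : q i ∈ symmConvexHull q :=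
  subset_convexHull ℝ _ (mem_iUnion.2 ⟨i, Or.inl rfl⟩)

theorem neg_mem_symmConvexHull (q : ι → V) (i : ι) : -q i ∈ symmConvexHull q :=
  subset_convexHull ℝ _ (mem_iUnion.2 ⟨i, Or.inr rfl⟩)

theorem zero_mem_symmConvexHull [Nonempty ι] (q : ι → V) : (0 : V) ∈ symmConvexHull q := by
  obtain ⟨i⟩ := ‹Nonempty ι›
  rw [← midpoint_self_neg ℝ (q i)]
  exact (convex_convexHull ℝ _).segment_subset (subset_symmConvexHull q i)
    (neg_mem_symmConvexHull q i) (midpoint_mem_segment _ _)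

theorem neg_symmConvexHull (q : ι → V) : -symmConvexHull q = symmConvexHull q := by
  rw [symmConvexHull, ← convexHull_neg, iUnion_neg]
  simp only [neg_insert, neg_singleton, neg_neg, pair_comm]

theorem symmConvexHull_subset {q : ι → V} {K : Set V} (hK : Convex ℝ K) (hneg : K = -K)
    (hq : ∀ i, q i ∈ K) : symmConvexHull q ⊆ K := by
  refine convexHull_min (iUnion_subset fun i => ?_) hK
  rintro _ (rfl | rfl)
  · exact hq i
  · rw [hneg]; exact neg_mem_neg.2 (hq i)

theorem span_range_smul_of_ne_zero {u : ι → V} {ρ : ι → ℝ} (hρ : ∀ i, ρ i ≠ 0) :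
    Submodule.span ℝ (range fun i => ρ i • u i) = Submodule.span ℝ (range u) := by
  refine le_antisymm (Submodule.span_le.2 ?_) (Submodule.span_le.2 ?_) <;> rintro _ ⟨i, rfl⟩
  · exact Submodule.smul_mem _ _ (Submodule.subset_span ⟨i, rfl⟩)
  · rw [← inv_smul_smul₀ (hρ i) (u i)]
    exact Submodule.smul_mem _ _ (Submodule.subset_span ⟨i, rfl⟩)

variable [TopologicalSpace V] [IsTopologicalAddGroup V] [ContinuousSMul ℝ V]

theorem isCompact_symmConvexHull [Finite ι] (q : ι → V) : IsCompact (symmConvexHull q) :=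
  (finite_iUnion fun _ => (finite_singleton _).insert _).isCompact_convexHull (𝕜 := ℝ)

end SymmConvexHull

section NormedSymmConvexHull

variable {ι V : Type*} [NormedAddCommGroup V] [NormedSpace ℝ V]

theorem zero_mem_interior_symmConvexHull [Nonempty ι] [FiniteDimensional ℝ V] {q : ι → V}
    (hq : Submodule.span ℝ (range q) = ⊤) : (0 : V) ∈ interior (symmConvexHull q) := by
  have hconv : Convex ℝ (interior (symmConvexHull q)) := (convex_convexHull ℝ _).interior
  obtain ⟨x, hx⟩ : (interior (symmConvexHull q)).Nonempty := by
    have hspan : Submodule.span ℝ (⋃ i, ({q i, -(q i)} : Set V)) = ⊤ :=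
      eq_top_iff.2 <| hq ▸ Submodule.span_mono
        (range_subset_iff.2 fun i => mem_iUnion.2 ⟨i, Or.inl rfl⟩)
    have h0 := convexHull_subset_affineSpan _ (zero_mem_symmConvexHull q)
    rw [symmConvexHull, interior_convexHull_nonempty_iff_affineSpan_eq_top,
      ← affineSpan_insert_eq_affineSpan ℝ h0, ← AffineSubspace.coe_eq_univ_iff,
      affineSpan_insert_zero, hspan, Submodule.top_coe]
  have hx' : -x ∈ interior (symmConvexHull q) := by
    have := mem_image_of_mem (Homeomorph.neg V) hx
    rwa [(Homeomorph.neg V).image_interior, Homeomorph.coe_neg, image_neg_eq_neg,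
      neg_symmConvexHull] at this
  rw [← midpoint_self_neg ℝ x]
  exact hconv.segment_subset hx hx' (midpoint_mem_segment _ _)

end NormedSymmConvexHull

section SupportRadial

variable {n : ℕ} {K L : Set (E n)}

theorem continuous_suppFn (hK : IsCompact K) : Continuous (suppFn K) :=
  hK.continuous_sSup (f := fun v x => ⟪x, v⟫_ℝ) (by fun_prop)

theorem le_suppFn (hK : IsCompact K) {x : E n} (hx : x ∈ K) (v : E n) : ⟪x, v⟫_ℝ ≤ suppFn K v :=
  le_csSup (hK.bddAbove_image (by fun_prop : Continuous fun x : E n => ⟪x, v⟫_ℝ).continuousOn)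
    (mem_image_of_mem _ hx)

theorem suppFn_mono (hKL : K ⊆ L) (hK : K.Nonempty) (hL : IsCompact L) (v : E n) :
    suppFn K v ≤ suppFn L v :=
  csSup_le_csSup
    (hL.bddAbove_image (by fun_prop : Continuous fun x : E n => ⟪x, v⟫_ℝ).continuousOn)
    (hK.image _) (image_mono hKL)

theorem exists_pos_smul_mem_of_zero_mem_interior (h0 : 0 ∈ interior K) (v : E n) :
    ∃ t : ℝ, 0 < t ∧ t • v ∈ K := by
  have hK : ∀ᶠ t in 𝓝 (0 : ℝ), t • v ∈ K :=
    (Continuous.tendsto' (by fun_prop : Continuous fun t : ℝ => t • v) 0 0 (zero_smul ℝ v))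
      |>.eventually (mem_interior_iff_mem_nhds.1 h0)
  obtain ⟨t, htK, ht⟩ :=
    ((hK.filter_mono (nhdsWithin_le_nhds (s := Ioi 0))).and self_mem_nhdsWithin).exists
  exact ⟨t, ht, htK⟩

theorem suppFn_pos (hK : IsCompact K) (h0 : 0 ∈ interior K) {v : E n} (hv : v ≠ 0) :
    0 < suppFn K v := by
  obtain ⟨t, ht, htv⟩ := exists_pos_smul_mem_of_zero_mem_interior h0 v
  refine lt_of_lt_of_le ?_ (le_suppFn hK htv v)
  rw [real_inner_smul_left, real_inner_self_eq_norm_sq]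
  exact mul_pos ht (by positivity)

theorem isCompact_radSet (hK : IsCompact K) {u : E n} (hu : u ≠ 0) :
    IsCompact {r : ℝ | 0 ≤ r ∧ r • u ∈ K} :=
  ((isClosedEmbedding_smul_left hu).isCompact_preimage hK).inter_left isClosed_Ici

theorem le_radFn (hK : IsCompact K) {u : E n} (hu : u ≠ 0) {r : ℝ} (hr : 0 ≤ r)
    (hrK : r • u ∈ K) : r ≤ radFn K u :=
  le_csSup (isCompact_radSet hK hu).bddAbove ⟨hr, hrK⟩

theorem radFn_pos (hK : IsCompact K) {u : E n} (hu : u ≠ 0) (h0 : 0 ∈ interior K) :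
    0 < radFn K u := by
  obtain ⟨t, ht, htu⟩ := exists_pos_smul_mem_of_zero_mem_interior h0 u
  exact ht.trans_le (le_radFn hK hu ht.le htu)

theorem radFn_smul_mem (hK : IsCompact K) {u : E n} (hu : u ≠ 0) (h0 : 0 ∈ K) :
    radFn K u • u ∈ K :=
  ((isCompact_radSet hK hu).sSup_mem ⟨0, le_rfl, by rwa [zero_smul]⟩).2

end SupportRadial

section Functionals

variable {n : ℕ} {K L : Set (E n)}

theorem integrableOn_log_suppFn (hK : IsCompact K) (h0 : 0 ∈ interior K) :
    IntegrableOn (fun v => Real.log (suppFn K v)) (sph n) (hm n) := by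
  have hfin : hm n (sph n) ≠ ⊤ := by
    have := hausdorffMeasure_sphere_lt_top (F := E n)
    rw [finrank_euclideanSpace_fin] at this
    exact this.ne
  refine ContinuousOn.integrableOn_of_subset_isCompact ?_ (isCompact_sphere 0 1)
    isClosed_sphere.measurableSet subset_rfl hfin
  exact (continuous_suppFn hK).continuousOn.log fun v hv =>
    (suppFn_pos hK h0 (ne_zero_of_mem_unit_sphere ⟨v, hv⟩)).ne'

theorem entropy_le_entropy_of_subset (hKL : K ⊆ L) (hK : IsCompact K) (hL : IsCompact L)
    (h0 : 0 ∈ interior K) : entropy L ≤ entropy K := by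
  refine neg_le_neg <| setIntegral_mono_on (integrableOn_log_suppFn hK h0)
    (integrableOn_log_suppFn hL (interior_mono hKL h0)) isClosed_sphere.measurableSet
    fun v hv => ?_
  exact Real.log_le_log (suppFn_pos hK h0 (ne_zero_of_mem_unit_sphere ⟨v, hv⟩))
    (suppFn_mono hKL ⟨0, interior_subset h0⟩ hL v)

theorem one_div_mul_log_sum_rpow_neg_le {ι : Type*} [Fintype ι] [Nonempty ι] {ρ ρ' w : ι → ℝ}
    (hρ : ∀ i, 0 < ρ i) (hρρ' : ∀ i, ρ i ≤ ρ' i) (hw : ∀ i, 0 < w i) (p : ℝ) {c : ℝ}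
    (hc : 0 < c) :
    1 / p * Real.log (c * ∑ i, ρ' i ^ (-p) * w i) ≤
      1 / p * Real.log (c * ∑ i, ρ i ^ (-p) * w i) := by
  have hpos : ∀ σ : ι → ℝ, (∀ i, 0 < σ i) → 0 < c * ∑ i, σ i ^ (-p) * w i := fun σ hσ =>
    mul_pos hc <| Finset.sum_pos (fun i _ => mul_pos (Real.rpow_pos_of_pos (hσ i) _) (hw i))
      Finset.univ_nonempty
  have hρ' : ∀ i, 0 < ρ' i := fun i => (hρ i).trans_le (hρρ' i)
  rcases lt_trichotomy p 0 with hp | rfl | hp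
  · refine mul_le_mul_of_nonpos_left (Real.log_le_log (hpos ρ hρ) ?_)
      (one_div_nonpos.2 hp.le)
    refine mul_le_mul_of_nonneg_left (Finset.sum_le_sum fun i _ => ?_) hc.le
    exact mul_le_mul_of_nonneg_right (Real.rpow_le_rpow (hρ i).le (hρρ' i) (by linarith))
      (hw i).le
  · simp
  · refine mul_le_mul_of_nonneg_left (Real.log_le_log (hpos ρ' hρ') ?_) (by positivity)
    refine mul_le_mul_of_nonneg_left (Finset.sum_le_sum fun i _ => ?_) hc.le
    exact mul_le_mul_of_nonneg_right (Real.rpow_le_rpow_of_nonpos (hρ i) (hρρ' i) (by linarith))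
      (hw i).le

theorem Phi_le_Phi_of_subset {N : ℕ} [NeZero N] {p : ℝ} {u : Fin N → E n} {w : Fin N → ℝ}
    (hw : ∀ i, 0 < w i) (hKL : K ⊆ L) (hK : IsCompact K) (hL : IsCompact L)
    (h0 : 0 ∈ interior K) (hρ : ∀ i, 0 < radFn L (u i)) (hρK : ∀ i, radFn L (u i) ≤ radFn K (u i)) :
    Phi p u w L ≤ Phi p u w K := by
  have hcoef : 0 ≤ 1 / (n * ballVol n) := by unfold ballVol; positivity
  exact sub_le_sub
    (mul_le_mul_of_nonneg_left (entropy_le_entropy_of_subset hKL hK hL h0) hcoef)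
    (one_div_mul_log_sum_rpow_neg_le hρ hρK hw p two_pos)

end Functionals

section RadialPolytope

variable {n : ℕ} {ι : Type*}

def radialPolytope (Q : Set (E n)) (u : ι → E n) : Set (E n) :=
  symmConvexHull fun i => radFn Q (u i) • u i

theorem radialPolytope_subset {Q : Set (E n)} {u : ι → E n} (hu : ∀ i, u i ≠ 0)
    (hQ : IsCompact Q) (hconv : Convex ℝ Q) (hsym : Q = -Q) (h0 : 0 ∈ Q) : radialPolytope Q u ⊆ Q :=
  symmConvexHull_subset hconv hsym fun i => radFn_smul_mem hQ (hu i) h0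

theorem radFn_le_radFn_radialPolytope [Finite ι] (Q : Set (E n)) {u : ι → E n} {i : ι}
    (hu : u i ≠ 0) : radFn Q (u i) ≤ radFn (radialPolytope Q u) (u i) :=
  le_radFn (isCompact_symmConvexHull _) hu (Real.sSup_nonneg fun _ hr => hr.1)
    (subset_symmConvexHull _ i)

end RadialPolytope

theorem phi_sup_over_Dmu_general {n N : ℕ} (hN : 0 < N)
    (p : ℝ)
    (u : Fin N → E n) (hu : ∀ i, u i ∈ sph n)
    (hspan : Submodule.span ℝ (Set.range u) = ⊤)
    (w : Fin N → ℝ) (hw : ∀ i, 0 < w i) :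
    (∀ Q : Set (E n), IsCompact Q → Convex ℝ Q → Q = -Q → 0 ∈ interior Q →
      (convexHull ℝ (⋃ i, ({radFn Q (u i) • u i, -(radFn Q (u i) • u i)} : Set (E n)))) ∈ Dmu u ∧
      (∀ v ∈ sph n,
        suppFn (convexHull ℝ (⋃ i, ({radFn Q (u i) • u i, -(radFn Q (u i) • u i)} : Set (E n)))) v
          ≤ suppFn Q v) ∧
      (∀ i : Fin N, radFn Q (u i) ≤
        radFn (convexHull ℝ (⋃ i, ({radFn Q (u i) • u i, -(radFn Q (u i) • u i)} : Set (E n))))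
          (u i)) ∧
      Phi p u w Q ≤
        Phi p u w
          (convexHull ℝ (⋃ i, ({radFn Q (u i) • u i, -(radFn Q (u i) • u i)} : Set (E n))))) ∧
    sSup (Phi p u w '' Dmu u) =
      sSup (Phi p u w ''
        {Q : Set (E n) | IsCompact Q ∧ Convex ℝ Q ∧ Q = -Q ∧ 0 ∈ interior Q}) := by
  have : NeZero N := ⟨hN.ne'⟩
  have hu0 : ∀ i, u i ≠ 0 := fun i => ne_zero_of_mem_unit_sphere ⟨u i, hu i⟩
  have hint : ∀ ρ : Fin N → ℝ, (∀ i, 0 < ρ i) →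
      0 ∈ interior (symmConvexHull fun i => ρ i • u i) :=
    fun ρ hρ => zero_mem_interior_symmConvexHull <| by
      rw [span_range_smul_of_ne_zero fun i => (hρ i).ne', hspan]
  have hpoly : ∀ Q : Set (E n), IsCompact Q → Convex ℝ Q → Q = -Q → 0 ∈ interior Q →
      radialPolytope Q u ∈ Dmu u ∧ radialPolytope Q u ⊆ Q ∧
        Phi p u w Q ≤ Phi p u w (radialPolytope Q u) := by
    intro Q hQ hconv hsym h0
    have hρ : ∀ i, 0 < radFn Q (u i) := fun i => radFn_pos hQ (hu0 i) h0
    have hsub := radialPolytope_subset hu0 hQ hconv hsym (interior_subset h0)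
    exact ⟨⟨_, hρ, rfl⟩, hsub, Phi_le_Phi_of_subset hw hsub (isCompact_symmConvexHull _) hQ
      (hint _ hρ) hρ fun i => radFn_le_radFn_radialPolytope Q (hu0 i)⟩
  refine ⟨fun Q hQ hconv hsym h0 => ?_, csSup_eq_csSup_of_forall_exists_le ?_ ?_⟩
  · obtain ⟨hD, hsub, hΦ⟩ := hpoly Q hQ hconv hsym h0
    exact ⟨hD, fun v _ => suppFn_mono hsub ⟨0, zero_mem_symmConvexHull _⟩ hQ v,
      fun i => radFn_le_radFn_radialPolytope Q (hu0 i), hΦ⟩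
  · rintro _ ⟨_, ⟨ρ, hρ, rfl⟩, rfl⟩
    exact ⟨_, mem_image_of_mem _ ⟨isCompact_symmConvexHull _, convex_convexHull ℝ _,
      (neg_symmConvexHull _).symm, hint ρ hρ⟩, le_rfl⟩
  · rintro _ ⟨Q, ⟨hQ, hconv, hsym, h0⟩, rfl⟩
    obtain ⟨hD, -, hΦ⟩ := hpoly Q hQ hconv hsym h0
    exact ⟨_, mem_image_of_mem _ hD, hΦ⟩

/-- replacing an origin-symmetric convex body `Q` by the polytope
`Q̃ = conv{±ρ_Q(u_i)u_i} ∈ D_μ` decreases support functions, increases the radial values at the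
`u_i`, hence increases `Φ`; consequently the sup of `Φ` over `D_μ` equals the sup over all
origin-symmetric convex bodies containing the origin in their interiors. -/
theorem phi_sup_over_Dmu {n N : ℕ} (hn : 2 ≤ n) (hN : 0 < N)
    (p : ℝ) (hp : p ≠ 0)
    (u : Fin N → E n) (hu : ∀ i, u i ∈ sph n)
    (hspan : Submodule.span ℝ (Set.range u) = ⊤)
    (w : Fin N → ℝ) (hw : ∀ i, 0 < w i) :
    (∀ Q : Set (E n), IsCompact Q → Convex ℝ Q → Q = -Q → 0 ∈ interior Q →
      (convexHull ℝ (⋃ i, ({radFn Q (u i) • u i, -(radFn Q (u i) • u i)} : Set (E n)))) ∈ Dmu u ∧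
      (∀ v ∈ sph n,
        suppFn (convexHull ℝ (⋃ i, ({radFn Q (u i) • u i, -(radFn Q (u i) • u i)} : Set (E n)))) v
          ≤ suppFn Q v) ∧
      (∀ i : Fin N, radFn Q (u i) ≤
        radFn (convexHull ℝ (⋃ i, ({radFn Q (u i) • u i, -(radFn Q (u i) • u i)} : Set (E n))))
          (u i)) ∧
      Phi p u w Q ≤
        Phi p u w
          (convexHull ℝ (⋃ i, ({radFn Q (u i) • u i, -(radFn Q (u i) • u i)} : Set (E n))))) ∧
    sSup (Phi p u w '' Dmu u) =
      sSup (Phi p u w ''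
        {Q : Set (E n) | IsCompact Q ∧ Convex ℝ Q ∧ Q = -Q ∧ 0 ∈ interior Q}) :=
  phi_sup_over_Dmu_general hN p u hu hspan w hw
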